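/- arXiv:1711.10176 — 6 statements merged into one kernel-verified Lean document; each statement's English description precedes it below -/
import Mathlib

section
/- For a vector x ∈ {0,1}^n with n divisible by 3, let m = n/3, let the first m gates be f_i = x_i, and for 0 ≤ i ≤ m let g_i = [∑_{j=m+1}^{n} x_j ≥ ⌈n/6⌉ + i]. Then [∑_{i=1}^{m} x_i + ∑_{i=0}^{m} g_i ≥ m + 1/2] = [∑_{j=1}^{n} x_j ≥ n/2], i.e., the depth-two majority circuit computes MAJ_n. -/
lemma maj_count_sum (c' b k : ℕ) :
    (∑ i ∈ Finset.range k, if ((b : ℤ) ≥ (c' : ℤ) + i) then 1 else 0 : ℕ) =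
      min k (b + 1 - c') := by
  induction k with
  | zero => simp
  | succ k ih =>
    rw [Finset.sum_range_succ, ih]
    split <;> rename_i h <;> omega

/-- Case n divisible by 3 of the depth-two majority circuit.
Gates: `f_i = x_i` for `1 ≤ i ≤ m = n/3`, and `g_i = [sum_M(x) ≥ ⌈n/6⌉ + i]`
for `0 ≤ i ≤ m`, where `M = {m+1, …, n}`.  The majority of these gate values
equals `MAJ_n(x)`. -/
theorem maj_circuit_case_div3 (n m : ℕ) (hn : 3 ∣ n) (hm : m = n / 3)
    (x : ℕ → Bool) :
    (((∑ i ∈ Finset.Icc 1 m, (if x i then 1 else 0)) +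
        ∑ i ∈ Finset.range (m + 1),
          (if ((∑ j ∈ Finset.Icc (m + 1) n, (if x j then 1 else 0) : ℕ) : ℤ) ≥
              ⌈(n : ℚ) / 6⌉ + i then 1 else 0) : ℕ) : ℚ) ≥ (m : ℚ) + 1 / 2 ↔
      ((∑ j ∈ Finset.Icc 1 n, (if x j then 1 else 0) : ℕ) : ℚ) ≥ (n : ℚ) / 2 := by
  have hn3 : n = 3 * m := by omega
  set a : ℕ := ∑ i ∈ Finset.Icc 1 m, (if x i then 1 else 0) with ha
  set b : ℕ := ∑ j ∈ Finset.Icc (m + 1) n, (if x j then 1 else 0) with hb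
  set c' : ℕ := (m + 1) / 2 with hc'
  -- ceiling computation
  have hceil : ⌈(n : ℚ) / 6⌉ = (c' : ℤ) := by
    have h1 : (m : ℚ) ≤ 2 * c' := by
      have : m ≤ 2 * c' := by omega
      exact_mod_cast this
    have h2 : (2 * c' : ℚ) ≤ m + 1 := by
      have : 2 * c' ≤ m + 1 := by omega
      exact_mod_cast this
    rw [Int.ceil_eq_iff]
    constructor
    · push_cast
      rw [hn3]
      push_cast
      linarith
    · push_cast
      rw [hn3]
      push_cast
      linarith
  -- gate count sum
  have hcount : (∑ i ∈ Finset.range (m + 1),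
      (if ((b : ℕ) : ℤ) ≥ ⌈(n : ℚ) / 6⌉ + i then 1 else 0) : ℕ) =
      min (m + 1) (b + 1 - c') := by
    rw [hceil]
    exact maj_count_sum c' b (m + 1)
  rw [hcount]
  -- total sum splits
  have hsplit : (∑ j ∈ Finset.Icc 1 n, (if x j then 1 else 0) : ℕ) = a + b := by
    rw [ha, hb]
    rw [show Finset.Icc 1 m = Finset.Ioc 0 m from Finset.Icc_add_one_left_eq_Ioc 0 m,
        show Finset.Icc (m+1) n = Finset.Ioc m n from Finset.Icc_add_one_left_eq_Ioc m n,
        show Finset.Icc 1 n = Finset.Ioc 0 n from Finset.Icc_add_one_left_eq_Ioc 0 n]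
    exact (Finset.sum_Ioc_consecutive _ (Nat.zero_le m) (by omega)).symm
  rw [hsplit]
  -- bound on a
  have hA : a ≤ m := by
    calc a ≤ ∑ i ∈ Finset.Icc 1 m, 1 :=
          Finset.sum_le_sum (fun i _ => by split <;> omega)
      _ = m := by simp
  -- reduce to nat arithmetic
  set G : ℕ := min (m + 1) (b + 1 - c') with hG
  have key : a + G ≥ m + 1 ↔ 2 * (a + b) ≥ n := by omega
  constructor
  · intro h
    have h1 : (m : ℚ) < ((a + G : ℕ) : ℚ) := by linarith
    have h2 : m < a + G := by exact_mod_cast h1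
    have h3 : 2 * (a + b) ≥ n := key.mp (by omega)
    rw [ge_iff_le, div_le_iff₀ (by norm_num : (0:ℚ) < 2)]
    have : (n : ℚ) ≤ (2 * (a + b) : ℕ) := by exact_mod_cast h3
    push_cast at this ⊢
    linarith
  · intro h
    have h1 : (n : ℚ) ≤ 2 * ((a + b : ℕ) : ℚ) := by
      rw [ge_iff_le, div_le_iff₀ (by norm_num : (0:ℚ) < 2)] at h
      linarith
    have h2 : n ≤ 2 * (a + b) := by exact_mod_cast h1
    have h3 : m + 1 ≤ a + G := key.mpr (by omega)
    have : ((m + 1 : ℕ) : ℚ) ≤ ((a + G : ℕ) : ℚ) := by exact_mod_cast h3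
    push_cast at this ⊢
    linarith
end

section
/- For n = 3m+1 and x ∈ {0,1}^n, let f_i = x_i for 1 ≤ i ≤ m+1, and for 1 ≤ i ≤ m+2 let g_i = [∑_{j=m+2}^{n} x_j ≥ ⌈(m-1)/2⌉ + i - 1]. Then the majority of these 2m+3 gate values equals MAJ_n(x), i.e., [∑_{i=1}^{m+1} x_i + ∑_{i=1}^{m+2} g_i ≥ (2m+3)/2] = [∑_{j=1}^{n} x_j ≥ n/2]. -/
/-!
Let `a` and `b` count the ones among `x₁, …, x_{m+1}` and among `x_{m+2}, …, x_n`, and let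
`c = ⌈(m-1)/2⌉ = ⌊m/2⌋`. Exactly `min (m+2) (b + 1 - c)` threshold gates fire. In the middle
range the circuit's condition `2(a + b + 1 - c) ≥ 2m+3` reads `2(a + b) ≥ 2m + 2c + 1`, which by
parity is the majority condition `2(a + b) ≥ 3m+1`. At the extremes both conditions fail (when no
gate fires, as `a ≤ m+1`) or both hold (when all gates fire).
-/

open Finset

lemma Int.ceil_natCast_sub_one_div_two {K : Type*} [Field K] [LinearOrder K]
    [IsStrictOrderedRing K] [FloorRing K] (m : ℕ) :
    ⌈((m : K) - 1) / 2⌉ = ((m / 2 : ℕ) : ℤ) := by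
  have hdiv : (m : K) = 2 * (m / 2 : ℕ) + (m % 2 : ℕ) := by
    exact_mod_cast (Nat.div_add_mod m 2).symm
  have hmod : ((m % 2 : ℕ) : K) ≤ 1 := by
    exact_mod_cast Nat.le_of_lt_succ (Nat.mod_lt m two_pos)
  rw [Int.ceil_eq_iff, Int.cast_natCast]
  constructor <;> linarith [((m % 2 : ℕ).cast_nonneg : (0 : K) ≤ _)]

lemma half_le_natCast_iff {K : Type*} [Field K] [LinearOrder K] [IsStrictOrderedRing K]
    (a b : ℕ) : (b : K) / 2 ≤ a ↔ b ≤ 2 * a := by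
  rw [div_le_iff₀ two_pos, mul_comm]
  exact_mod_cast Iff.rfl

lemma Finset.sum_Icc_consecutive {M : Type*} [AddCommMonoid M] (f : ℕ → M) {a b c : ℕ}
    (hab : a ≤ b + 1) (hbc : b ≤ c) :
    ∑ i ∈ Icc a b, f i + ∑ i ∈ Icc (b + 1) c, f i = ∑ i ∈ Icc a c, f i := by
  simp only [← Ico_add_one_right_eq_Icc]
  exact sum_Ico_consecutive f hab (by omega)

lemma Finset.sum_boole_le_card {ι : Type*} (s : Finset ι) (p : ι → Prop) [DecidablePred p] :
    (∑ i ∈ s, if p i then 1 else 0 : ℕ) ≤ #s := by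
  simpa only [sum_boole, Nat.cast_id] using card_filter_le s p

lemma sum_Icc_threshold_gates (k c b : ℕ) :
    (∑ i ∈ Icc 1 k, if (b : ℤ) ≥ (c : ℤ) + i - 1 then 1 else 0 : ℕ) = min k (b + 1 - c) := by
  have hfilter :
      {i ∈ Icc 1 k | (b : ℤ) ≥ (c : ℤ) + (i : ℕ) - 1} = Icc 1 (min k (b + 1 - c)) := by
    ext i
    simp only [mem_filter, mem_Icc]
    omega
  rw [sum_boole, Nat.cast_id, hfilter, Nat.card_Icc, Nat.add_sub_cancel]

lemma two_mul_add_min_iff {a b m : ℕ} (ha : a ≤ m + 1) :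
    2 * m + 3 ≤ 2 * (a + min (m + 2) (b + 1 - m / 2)) ↔ 3 * m + 1 ≤ 2 * (a + b) := by
  omega

/-- Case `n = 3m + 1` of the depth-two majority circuit.
Gates: `f_i = x_i` for `1 ≤ i ≤ m+1`, and `g_i = [sum_M(x) ≥ ⌈(m-1)/2⌉ + i - 1]`
for `1 ≤ i ≤ m+2`, where `M = {m+2, …, n}`.  The majority of these `2m+3` gate
values equals `MAJ_n(x)`. -/
theorem maj_circuit_case_mod1 (n m : ℕ) (hn : n = 3 * m + 1) (x : ℕ → Bool) :
    (((∑ i ∈ Finset.Icc 1 (m + 1), (if x i then 1 else 0)) +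
        ∑ i ∈ Finset.Icc 1 (m + 2),
          (if ((∑ j ∈ Finset.Icc (m + 2) n, (if x j then 1 else 0) : ℕ) : ℤ) ≥
              ⌈((m : ℚ) - 1) / 2⌉ + i - 1 then 1 else 0) : ℕ) : ℚ) ≥
        (2 * (m : ℚ) + 3) / 2 ↔
      ((∑ j ∈ Finset.Icc 1 n, (if x j then 1 else 0) : ℕ) : ℚ) ≥ (n : ℚ) / 2 := by
  subst hn
  set a := ∑ i ∈ Icc 1 (m + 1), if x i then 1 else 0
  set b := ∑ j ∈ Icc (m + 2) (3 * m + 1), if x j then 1 else 0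
  have ha : a ≤ m + 1 := (sum_boole_le_card _ _).trans (by simp)
  have htotal : ∑ j ∈ Icc 1 (3 * m + 1), (if x j then 1 else 0) = a + b :=
    (sum_Icc_consecutive _ (by omega) (by omega)).symm
  rw [Int.ceil_natCast_sub_one_div_two, sum_Icc_threshold_gates, htotal,
    show (2 * (m : ℚ) + 3) = ((2 * m + 3 : ℕ) : ℚ) by push_cast; ring,
    ge_iff_le, ge_iff_le, half_le_natCast_iff, half_le_natCast_iff]
  exact two_mul_add_min_iff ha
end

section
/- For every n, the majority function MAJ_n on n boolean inputs is computable by a depth-two circuit in which the output gate and every first-level gate is an integer-weighted threshold function with total weight at most (2/3)n + 4. -/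
lemma count_le (c r : ℕ) :
    (∑ k ∈ Finset.range (r+1), if k ≤ c then (1:ℕ) else 0) = min c r + 1 := by
  induction r with
  | zero => rw [Finset.sum_range_one]; simp
  | succ r ih => rw [Finset.sum_range_succ, ih]; split <;> omega

lemma count_ge (d r : ℕ) :
    (∑ k ∈ Finset.range (r+1), if d ≤ k then (1:ℕ) else 0) = r + 1 - min d (r+1) := by
  induction r with
  | zero => rw [Finset.sum_range_one]; split <;> omega
  | succ r ih => rw [Finset.sum_range_succ, ih]; split <;> omega

/-- For every `n`, `MAJ_n` is computable by a depth-two circuit whose output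
gate and first-level gates are integer-weighted threshold functions of total
weight at most `(2/3)n + 4`. -/
theorem maj_depth_two_upper_bound (n : ℕ) :
    ∃ (G : ℕ) (w : Fin G → ℕ → ℕ) (t : Fin G → ℤ) (β : Fin G → ℕ) (T : ℤ),
      (∀ g : Fin G, ((∑ i ∈ Finset.Icc 1 n, w g i : ℕ) : ℚ) ≤ 2 / 3 * n + 4) ∧
      ((∑ g : Fin G, β g : ℕ) : ℚ) ≤ 2 / 3 * n + 4 ∧
      ∀ x : ℕ → Bool,
        ((((∑ g : Fin G, β g *
            (if ((∑ i ∈ Finset.Icc 1 n, w g i * (if x i then 1 else 0) : ℕ) : ℤ) ≥ t g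
              then 1 else 0) : ℕ) : ℤ) ≥ T) ↔
          ((∑ i ∈ Finset.Icc 1 n, (if x i then 1 else 0) : ℕ) : ℚ) ≥ (n : ℚ) / 2) := by
  set r := (n+2)/3 with hr
  set s := n - r with hs
  set t := (n+1)/2 with ht
  have hrn : 3 * r ≤ n + 2 ∧ n ≤ 3 * r ∧ r ≤ n ∧ s = n - r := by omega
  have hsub : Finset.Icc (s+1) n ⊆ Finset.Icc 1 n := Finset.Icc_subset_Icc (by omega) le_rfl
  have hsub' : Finset.Icc 1 s ⊆ Finset.Icc 1 n := Finset.Icc_subset_Icc le_rfl (by omega)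
  refine ⟨2*r+2,
    (fun g i => if (g:ℕ) ≤ r then (if i ∈ Finset.Icc (s+1) n then 1 else 0)
                else (if i ∈ Finset.Icc 1 s then 1 else 0)),
    (fun g => if (g:ℕ) ≤ r then ((g:ℕ):ℤ) else (t:ℤ) - (((g:ℕ) - (r+1) : ℕ):ℤ)),
    (fun _ => 1), (r:ℤ)+2, ?_, ?_, ?_⟩
  · intro g
    by_cases hg : (g:ℕ) ≤ r
    · have : (∑ i ∈ Finset.Icc 1 n,
          if (g:ℕ) ≤ r then (if i ∈ Finset.Icc (s+1) n then (1:ℕ) else 0)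
          else (if i ∈ Finset.Icc 1 s then 1 else 0)) = r := by
        simp only [hg, if_true]
        rw [Finset.sum_ite_mem, Finset.inter_eq_right.mpr hsub]
        simp [Nat.card_Icc]; omega
      rw [this]
      have h3 : (3:ℚ) * r ≤ n + 2 := by exact_mod_cast (by omega : 3*r ≤ n+2)
      linarith
    · have : (∑ i ∈ Finset.Icc 1 n,
          if (g:ℕ) ≤ r then (if i ∈ Finset.Icc (s+1) n then (1:ℕ) else 0)
          else (if i ∈ Finset.Icc 1 s then 1 else 0)) = s := by
        simp only [hg, if_false]
        rw [Finset.sum_ite_mem, Finset.inter_eq_right.mpr hsub']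
        simp [Nat.card_Icc]
      rw [this]
      have h3 : (3:ℚ) * s ≤ 2 * n := by exact_mod_cast (by omega : 3*s ≤ 2*n)
      linarith
  · have : (∑ _g : Fin (2*r+2), (1:ℕ)) = 2*r+2 := by simp
    rw [this]
    have h3 : (3:ℚ) * r ≤ n + 2 := by exact_mod_cast (by omega : 3*r ≤ n+2)
    push_cast
    linarith
  · intro x
    set c := (∑ i ∈ Finset.Icc (s+1) n, if x i then (1:ℕ) else 0) with hc
    set u := (∑ i ∈ Finset.Icc 1 s, if x i then (1:ℕ) else 0) with hu
    have hcle : c ≤ r := by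
      calc c ≤ ∑ _i ∈ Finset.Icc (s+1) n, 1 :=
            Finset.sum_le_sum (fun i _ => by split <;> omega)
        _ = r := by simp [Nat.card_Icc]; omega
    have htot : (∑ i ∈ Finset.Icc 1 n, if x i then (1:ℕ) else 0) = u + c := by
      rw [hu, hc]
      rw [show Finset.Icc 1 n = Finset.Ioc 0 n from Finset.Icc_add_one_left_eq_Ioc 0 n,
          show Finset.Icc 1 s = Finset.Ioc 0 s from Finset.Icc_add_one_left_eq_Ioc 0 s,
          show Finset.Icc (s+1) n = Finset.Ioc s n from Finset.Icc_add_one_left_eq_Ioc s n]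
      exact (Finset.sum_Ioc_consecutive _ (by omega) (by omega)).symm
    have key : ∀ g : Fin (2*r+2),
        (1 * (if ((∑ i ∈ Finset.Icc 1 n,
            (if (g:ℕ) ≤ r then (if i ∈ Finset.Icc (s+1) n then (1:ℕ) else 0)
             else (if i ∈ Finset.Icc 1 s then 1 else 0)) * (if x i then 1 else 0) : ℕ) : ℤ)
            ≥ (if (g:ℕ) ≤ r then ((g:ℕ):ℤ) else (t:ℤ) - (((g:ℕ) - (r+1) : ℕ):ℤ))
          then 1 else 0) : ℕ)
        = if (g:ℕ) ≤ r then (if (g:ℕ) ≤ c then 1 else 0)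
          else (if t - u ≤ (g:ℕ) - (r+1) then 1 else 0) := by
      intro g
      rw [one_mul]
      by_cases hg : (g:ℕ) ≤ r
      · simp only [hg, if_true]
        have hsum : (∑ i ∈ Finset.Icc 1 n,
            (if i ∈ Finset.Icc (s+1) n then (1:ℕ) else 0) * (if x i then 1 else 0)) = c := by
          simp only [ite_mul, one_mul, zero_mul]
          rw [Finset.sum_ite_mem, Finset.inter_eq_right.mpr hsub]
        rw [hsum]
        congr 1
        simp only [ge_iff_le, eq_iff_iff]
        exact_mod_cast Iff.rfl
      · simp only [hg, if_false]
        have hsum : (∑ i ∈ Finset.Icc 1 n,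
            (if i ∈ Finset.Icc 1 s then (1:ℕ) else 0) * (if x i then 1 else 0)) = u := by
          simp only [ite_mul, one_mul, zero_mul]
          rw [Finset.sum_ite_mem, Finset.inter_eq_right.mpr hsub']
        rw [hsum]
        congr 1
        simp only [ge_iff_le, eq_iff_iff]
        constructor <;> intro h <;> omega
    rw [Finset.sum_congr rfl (fun g _ => key g)]
    rw [Fin.sum_univ_eq_sum_range
      (fun k => if k ≤ r then (if k ≤ c then (1:ℕ) else 0)
        else (if t - u ≤ k - (r+1) then 1 else 0))]
    rw [show 2*r+2 = (r+1) + (r+1) by ring, Finset.sum_range_add]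
    have h1 : (∑ k ∈ Finset.range (r+1),
        if k ≤ r then (if k ≤ c then (1:ℕ) else 0)
        else (if t - u ≤ k - (r+1) then 1 else 0)) = min c r + 1 := by
      rw [← count_le c r]
      refine Finset.sum_congr rfl (fun k hk => ?_)
      have : k ≤ r := by simpa using Nat.lt_succ_iff.mp (Finset.mem_range.mp hk)
      simp [this]
    have h2 : (∑ k ∈ Finset.range (r+1),
        if (r+1) + k ≤ r then (if (r+1) + k ≤ c then (1:ℕ) else 0)
        else (if t - u ≤ (r+1) + k - (r+1) then 1 else 0)) = r + 1 - min (t - u) (r+1) := by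
      rw [← count_ge (t - u) r]
      refine Finset.sum_congr rfl (fun k hk => ?_)
      have h' : ¬ ((r+1) + k ≤ r) := by omega
      have h'' : (r+1) + k - (r+1) = k := by omega
      simp only [h', if_false, h'']
    rw [h1, h2, htot]
    have hrhs : (((u + c : ℕ) : ℚ) ≥ (n:ℚ)/2) ↔ n ≤ (u + c) * 2 := by
      rw [ge_iff_le, div_le_iff₀ (by norm_num : (0:ℚ) < 2)]
      exact_mod_cast Iff.rfl
    rw [hrhs]
    omega
end

section
/- Let c ≥ 1 and let v : {1,...,2c} → {0,1} be such that MAJ(v(1),...,v(c)) ≠ MAJ(v(c+1),...,v(2c)). Then there exists h with 1 ≤ h ≤ c such that f(h) ≠ f(h+1), where f(m) = MAJ(v(m),...,v(m+c-1)); moreover for any such h, v(h) ≠ v(h+c) and v(h) = f(h). -/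
/-- `f m` is the majority of the length-`c` window of `v` starting at `m`. -/
def windowMaj (c : ℕ) (v : ℕ → Bool) (m : ℕ) : Bool :=
  decide (((∑ j ∈ Finset.Icc m (m + c - 1), (if v j then 1 else 0) : ℕ) : ℚ) ≥ (c : ℚ) / 2)

/-- If the two halves of a length-`2c` boolean sequence have different
majorities, then some adjacent windows differ: there is `1 ≤ h ≤ c` with
`f(h) ≠ f(h+1)`; moreover for any such `h`, `v(h) ≠ v(h+c)` and `v(h) = f(h)`. -/
theorem sliding_window_binary_search (c : ℕ) (hc : 1 ≤ c) (v : ℕ → Bool)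
    (hdiff : windowMaj c v 1 ≠ windowMaj c v (c + 1)) :
    (∃ h, 1 ≤ h ∧ h ≤ c ∧ windowMaj c v h ≠ windowMaj c v (h + 1)) ∧
      ∀ h, 1 ≤ h → h ≤ c → windowMaj c v h ≠ windowMaj c v (h + 1) →
        v h ≠ v (h + c) ∧ v h = windowMaj c v h := by
  classical
  set S : ℕ → ℕ := fun m => ∑ j ∈ Finset.Icc m (m + c - 1), (if v j then 1 else 0) with hS
  have hwm : ∀ m, windowMaj c v m = decide (((S m : ℚ)) ≥ (c : ℚ) / 2) := fun m => rfl
  have hstep : ∀ m, S (m + 1) + (if v m then 1 else 0)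
      = S m + (if v (m + c) then 1 else 0) := by
    intro m
    have h1 : m + 1 + c - 1 = m + c := by omega
    have h2 : m + c - 1 + 1 = m + c := by omega
    have htop : ∑ j ∈ Finset.Icc m (m + c), (if v j then (1 : ℕ) else 0)
        = S m + (if v (m + c) then 1 else 0) := by
      rw [hS]; simp only
      rw [← h2, Finset.sum_Icc_succ_top (by omega), Nat.add_sub_cancel]
    have hbot : ∑ j ∈ Finset.Icc m (m + c), (if v j then (1 : ℕ) else 0)
        = (if v m then 1 else 0) + S (m + 1) := by
      rw [hS]; simp only [h1]
      have he : Finset.Icc m (m + c) = insert m (Finset.Icc (m + 1) (m + c)) := by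
        ext x; simp only [Finset.mem_Icc, Finset.mem_insert]; omega
      rw [he, Finset.sum_insert (by simp only [Finset.mem_Icc]; omega)]
    omega
  have key : ∀ h, windowMaj c v h ≠ windowMaj c v (h + 1) →
      v h ≠ v (h + c) ∧ v h = windowMaj c v h := by
    intro h hne
    have hst := hstep h
    have hvne : v h ≠ v (h + c) := by
      intro heq
      apply hne
      rw [heq] at hst
      have : S (h + 1) = S h := by omega
      rw [hwm, hwm, this]
    refine ⟨hvne, ?_⟩
    cases hvh : v h with
    | true =>
      have hvc : v (h + c) = false := by
        cases hvc : v (h + c) <;> simp_all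
      rw [hvh, hvc] at hst
      simp at hst
      -- S (h+1) + 1 = S h + 0
      have hle : S (h + 1) ≤ S h := by omega
      by_contra hne2
      have hf : windowMaj c v h = false := by
        cases hw : windowMaj c v h <;> simp_all
      rw [hwm] at hf
      have hlt : ((S h : ℚ)) < (c : ℚ) / 2 := by
        by_contra hge
        simp [not_lt] at hge
        simp [hge] at hf
      have hlt2 : ((S (h + 1) : ℚ)) < (c : ℚ) / 2 := lt_of_le_of_lt (by exact_mod_cast hle) hlt
      apply hne
      rw [hwm, hwm]
      simp [not_le.mpr hlt, not_le.mpr hlt2]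
    | false =>
      have hvc : v (h + c) = true := by
        cases hvc : v (h + c) <;> simp_all
      rw [hvh, hvc] at hst
      simp at hst
      have hle : S h ≤ S (h + 1) := by omega
      by_contra hne2
      have hf : windowMaj c v h = true := by
        cases hw : windowMaj c v h <;> simp_all
      rw [hwm] at hf
      have hge : ((S h : ℚ)) ≥ (c : ℚ) / 2 := by
        by_contra hge
        simp [hge] at hf
      have hge2 : ((S (h + 1) : ℚ)) ≥ (c : ℚ) / 2 :=
        le_trans hge (by exact_mod_cast hle)
      apply hne
      rw [hwm, hwm]
      simp [hge, hge2]
  refine ⟨?_, fun h _ _ hne => key h hne⟩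
  by_contra hno
  push_neg at hno
  have hall : ∀ k, k ≤ c → windowMaj c v 1 = windowMaj c v (1 + k) := by
    intro k
    induction k with
    | zero => intro _; rfl
    | succ n ih =>
      intro hkc
      have h1 := ih (by omega)
      have h2 := hno (1 + n) (by omega) (by omega)
      rw [show 1 + (n + 1) = 1 + n + 1 from rfl, h1, ← h2]
  apply hdiff
  have := hall c le_rfl
  rwa [Nat.add_comm 1 c] at this
end

section
/- Any deterministic algorithm that computes MAJ_n by adaptively querying values MAJ_S(x) for sets S of size at most k must make at least ⌈n/k⌉ queries in the worst case. Equivalently, for any sequence of fewer than ⌈n/k⌉ sets S_1,...,S_m each of size at most k, there exist vectors x, y ∈ {0,1}^n with MAJ_{S_j}(x) = MAJ_{S_j}(y) for all j but MAJ_n(x) ≠ MAJ_n(y). -/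
/-- `MAJ_T(x)` as a boolean. -/
def majOn (T : Finset ℕ) (x : ℕ → Bool) : Bool :=
  decide (((∑ i ∈ T, (if x i then 1 else 0) : ℕ) : ℚ) ≥ (T.card : ℚ) / 2)

lemma sum_ind (T A : Finset ℕ) :
    (∑ i ∈ T, (if (decide (i ∈ A) : Bool) then 1 else 0) : ℕ) = (T ∩ A).card := by
  simp only [decide_eq_true_eq, Finset.sum_ite_mem, Finset.sum_const, smul_eq_mul, mul_one]

/-- Adversary lower bound: fewer than `⌈n/k⌉` majority queries on sets of size
at most `k` cannot determine `MAJ_n`: there are two inputs agreeing on all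
query answers but with different majorities. -/
theorem adaptive_lower_bound (n k : ℕ) (hn : 1 ≤ n) (hk : 1 ≤ k)
    (m : ℕ) (hm : m < ⌈(n : ℚ) / (k : ℚ)⌉₊)
    (S : Fin m → Finset ℕ) (hsub : ∀ j, S j ⊆ Finset.Icc 1 n)
    (hcard : ∀ j, (S j).card ≤ k) :
    ∃ x y : ℕ → Bool,
      (∀ j, majOn (S j) x = majOn (S j) y) ∧
        majOn (Finset.Icc 1 n) x ≠ majOn (Finset.Icc 1 n) y := by
  have hkQ : (0:ℚ) < k := by exact_mod_cast hk
  have hmk : m * k < n := by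
    have h1 : (m:ℚ) < (n:ℚ) / k := Nat.lt_ceil.mp hm
    have h2 : (m:ℚ) * k < n := (lt_div_iff₀ hkQ).mp h1
    exact_mod_cast h2
  set U := Finset.Icc 1 n with hU
  have hUcard : U.card = n := by simp [hU]
  have hbi : (Finset.univ.biUnion S).card ≤ m * k := by
    calc (Finset.univ.biUnion S).card ≤ ∑ j : Fin m, (S j).card := Finset.card_biUnion_le
    _ ≤ ∑ _j : Fin m, k := Finset.sum_le_sum fun j _ => hcard j
    _ = m * k := by simp [Finset.sum_const, mul_comm]
  have hns : ¬ U ⊆ Finset.univ.biUnion S := fun h => by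
    have := Finset.card_le_card h; omega
  obtain ⟨i0, hi0U, hi0⟩ := Finset.not_subset.mp hns
  have hi0S : ∀ j, i0 ∉ S j := fun j hj =>
    hi0 (Finset.mem_biUnion.mpr ⟨j, Finset.mem_univ j, hj⟩)
  set s := (n-1)/2 with hs
  have hsle : s ≤ (U.erase i0).card := by
    rw [Finset.card_erase_of_mem hi0U, hUcard]; omega
  obtain ⟨A, hAsub, hAcard⟩ := Finset.exists_subset_card_eq hsle
  have hAU : A ⊆ U := hAsub.trans (Finset.erase_subset _ _)
  have hi0A : i0 ∉ A := fun h => (Finset.mem_erase.mp (hAsub h)).1 rfl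
  refine ⟨fun i => decide (i ∈ A), fun i => decide (i ∈ insert i0 A), ?_, ?_⟩
  · intro j
    unfold majOn
    rw [sum_ind, sum_ind]
    have : S j ∩ A = S j ∩ insert i0 A := by
      ext i
      simp only [Finset.mem_inter, Finset.mem_insert]
      constructor
      · rintro ⟨h1, h2⟩; exact ⟨h1, Or.inr h2⟩
      · rintro ⟨h1, h2⟩
        rcases h2 with rfl | h2
        · exact absurd h1 (hi0S j)
        · exact ⟨h1, h2⟩
    rw [this]
  · unfold majOn
    rw [sum_ind, sum_ind]
    have h1 : U ∩ A = A := Finset.inter_eq_right.mpr hAU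
    have h2 : U ∩ insert i0 A = insert i0 A := Finset.inter_eq_right.mpr
      (Finset.insert_subset hi0U hAU)
    rw [h1, h2, hAcard, Finset.card_insert_of_notMem hi0A, hAcard, hUcard]
    have hlt : (s:ℚ) < (n:ℚ) / 2 := by
      rw [lt_div_iff₀ (by norm_num : (0:ℚ) < 2)]
      have : 2 * s < n := by omega
      rw [mul_comm]
      exact_mod_cast this
    have hge : ((s+1 : ℕ):ℚ) ≥ (n:ℚ) / 2 := by
      rw [ge_iff_le, div_le_iff₀ (by norm_num : (0:ℚ) < 2)]
      have : n ≤ 2 * (s + 1) := by omega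
      push_cast
      have : (n:ℚ) ≤ 2 * (s + 1) := by exact_mod_cast this
      linarith
    simp only [ne_eq, decide_eq_decide]
    intro h
    exact absurd (h.mpr hge) (not_le.mpr hlt)
end

section
/- Let S ⊆ {1,...,n} with ∑_{i∈S} x_i = ⌊|S|/2⌋ and |S| < n. Define y by y_i = x_i for i ∈ S and y_i = 1 otherwise, and z by z_i = x_i for i ∈ S and z_i = 0 otherwise. Then MAJ_n(y) = 1 and MAJ_n(z) = 0. -/
/-- Adversary-argument step: if `S ⊆ {1,…,n}` with `|S| < n` carries exactly
`⌊|S|/2⌋` ones of `x`, then completing the remaining coordinates with ones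
gives majority `1` and completing them with zeros gives majority `0`. -/
theorem adversary_completion (n : ℕ) (S : Finset ℕ) (hS : S ⊆ Finset.Icc 1 n)
    (hcard : S.card < n) (x : ℕ → Bool)
    (hbal : (∑ i ∈ S, (if x i then 1 else 0) : ℕ) = S.card / 2) :
    (((∑ i ∈ Finset.Icc 1 n,
        (if (if i ∈ S then x i else true) then 1 else 0) : ℕ) : ℚ) ≥ (n : ℚ) / 2) ∧
      ¬ (((∑ i ∈ Finset.Icc 1 n,
        (if (if i ∈ S then x i else false) then 1 else 0) : ℕ) : ℚ) ≥ (n : ℚ) / 2) := by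
  have hunion : Finset.Icc 1 n = S ∪ (Finset.Icc 1 n \ S) :=
    (Finset.union_sdiff_of_subset hS).symm
  have hdisj : Disjoint S (Finset.Icc 1 n \ S) := Finset.disjoint_sdiff
  have hcardIcc : (Finset.Icc 1 n).card = n := by simp
  have hsd : (Finset.Icc 1 n \ S).card = n - S.card := by
    rw [Finset.card_sdiff_of_subset hS, hcardIcc]
  have hsum : ∀ c : Bool,
      (∑ i ∈ Finset.Icc 1 n, (if (if i ∈ S then x i else c) then 1 else 0) : ℕ)
        = S.card / 2 + (n - S.card) * (if c then 1 else 0) := by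
    intro c
    rw [hunion, Finset.sum_union hdisj]
    have h1 : (∑ i ∈ S, (if (if i ∈ S then x i else c) then 1 else 0) : ℕ)
        = S.card / 2 := by
      rw [← hbal]
      exact Finset.sum_congr rfl fun i hi => by simp [hi]
    have h2 : (∑ i ∈ Finset.Icc 1 n \ S, (if (if i ∈ S then x i else c) then 1 else 0) : ℕ)
        = (n - S.card) * (if c then 1 else 0) := by
      have hc : ∀ i ∈ Finset.Icc 1 n \ S,
          (if (if i ∈ S then x i else c) then 1 else 0 : ℕ) = (if c then 1 else 0) := by
        intro i hi
        have : i ∉ S := (Finset.mem_sdiff.mp hi).2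
        simp [this]
      rw [Finset.sum_congr rfl hc, Finset.sum_const, smul_eq_mul, hsd]
    rw [h1, h2]
  constructor
  · rw [hsum true]
    rw [ge_iff_le, div_le_iff₀ (by norm_num)]
    have h : n ≤ (S.card / 2 + (n - S.card) * (if (true : Bool) then 1 else 0)) * 2 := by
      simp; omega
    exact_mod_cast h
  · rw [hsum false]
    rw [ge_iff_le, div_le_iff₀ (by norm_num), not_le]
    have h : (S.card / 2 + (n - S.card) * (if (false : Bool) then 1 else 0)) * 2 < n := by
      simp; omega
    exact_mod_cast h
end
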